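/- Let f : ℝ^{n1×n2} → ℝ be twice continuously differentiable and suppose there are constants 0 < µ ≤ L such that µ‖W‖_F² ≤ D²f(X)[W, W] ≤ L‖W‖_F² for all X, W ∈ ℝ^{n1×n2}, where D²f(X) is the second derivative (Hessian quadratic form) of f at X. Let X⋆ ∈ ℝ^{n1×n2} satisfy ∇f(X⋆) = 0, let B ∈ ℝ^{n1×r} and R ∈ ℝ^{n2×r}, and set X := B Rᵀ, E := X − X⋆, and ε := (L−µ)/(L+µ). Then for every O ∈ ℝ^{n1×r} with ‖O‖_F = 1, ⟨∇f(X) R, O⟩_F ≥ ((µ+L)/2) ( ⟨E, O Rᵀ⟩_F − ε ‖E‖_F ‖O Rᵀ‖_F ); in particular ‖∇f(X) R‖_F ≥ ((µ+L)/2) ( ⟨E, O Rᵀ⟩_F − ε ‖E‖_F ‖O Rᵀ‖_F ) for every such O. -/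

import Mathlib

open Matrix

/-- Frobenius inner product of two real matrices. -/
noncomputable def finner {m n : Type*} [Fintype m] [Fintype n]
    (A B : Matrix m n ℝ) : ℝ := (Aᵀ * B).trace

/-- Frobenius norm of a real matrix. -/
noncomputable def fnorm {m n : Type*} [Fintype m] [Fintype n]
    (A : Matrix m n ℝ) : ℝ := Real.sqrt (finner A A)

attribute [local instance] Matrix.frobeniusNormedAddCommGroup Matrix.frobeniusNormedSpace

/-!
Along the segment `t ↦ X⋆ + t • E` the derivative of `t ↦ Df(X⋆ + t • E)[W]` is the Hessian
`D²f[E, W]`. Shifting the Hessian by `(μ + L) / 2` times the inner product leaves a symmetric form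
whose quadratic form is bounded by `(L - μ) / 2 * ‖·‖²`, so by polarization
`|D²f[E, W] - (μ + L) / 2 * ⟪E, W⟫| ≤ (L - μ) / 2 * ‖E‖ * ‖W‖`. The mean value theorem on `[0, 1]`,
`∇f(X⋆) = 0` and `⟪∇f(X) R, O⟫ = ⟪∇f(X), O Rᵀ⟫` with `W = O Rᵀ` give the first bound;
Cauchy–Schwarz with `‖O‖ = 1` gives the second.
-/

open scoped RealInnerProductSpace

section Frobenius

variable {m n : Type*} [Fintype m] [Fintype n]

lemma finner_eq_sum (A B : Matrix m n ℝ) : finner A B = ∑ i, ∑ j, A i j * B i j := by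
  simp only [finner, trace, diag, mul_apply, transpose_apply]
  exact Finset.sum_comm

lemma frobenius_norm_sq_eq_finner (A : Matrix m n ℝ) : ‖A‖ ^ 2 = finner A A := by
  rw [frobenius_norm_def, ← Real.sqrt_eq_rpow, Real.sq_sqrt (by positivity), finner_eq_sum]
  simp [← sq]

lemma fnorm_eq_norm (A : Matrix m n ℝ) : fnorm A = ‖A‖ := by
  rw [fnorm, ← frobenius_norm_sq_eq_finner, Real.sqrt_sq (norm_nonneg A)]

lemma finner_mul_eq_finner_mul_transpose {r : Type*} [Fintype r] (G : Matrix m n ℝ)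
    (R : Matrix n r ℝ) (O : Matrix m r ℝ) : finner (G * R) O = finner G (O * Rᵀ) := by
  rw [finner, finner, transpose_mul, Matrix.mul_assoc, trace_mul_comm, Matrix.mul_assoc]

@[reducible]
noncomputable def frobeniusInnerProductSpace : InnerProductSpace ℝ (Matrix m n ℝ) where
  inner := finner
  norm_sq_eq_re_inner := frobenius_norm_sq_eq_finner
  conj_inner_symm A B := by simp [finner_eq_sum, mul_comm]
  add_left A B C := by simp [finner_eq_sum, add_mul, Finset.sum_add_distrib]
  smul_left A B r := by simp [finner_eq_sum, Finset.mul_sum, mul_assoc]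

end Frobenius

attribute [local instance] frobeniusInnerProductSpace

lemma real_inner_eq_finner {m n : Type*} [Fintype m] [Fintype n] (A B : Matrix m n ℝ) :
    ⟪A, B⟫ = finner A B := rfl

section InnerProductSpace

variable {F : Type*} [NormedAddCommGroup F] [InnerProductSpace ℝ F]

lemma abs_apply_apply_le_of_abs_apply_self_le {d : ℝ} (P : F →L[ℝ] F →L[ℝ] ℝ)
    (hsymm : ∀ u v, P u v = P v u) (hP : ∀ w, |P w w| ≤ d * ‖w‖ ^ 2) (u v : F) :
    |P u v| ≤ d * ‖u‖ * ‖v‖ := by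
  have polarization : ∀ a b : F, 4 * |P a b| ≤ 2 * d * (‖a‖ ^ 2 + ‖b‖ ^ 2) := by
    intro a b
    have h4 : 4 * P a b = P (a + b) (a + b) - P (a - b) (a - b) := by
      simp only [map_add, map_sub, _root_.add_apply, _root_.sub_apply, hsymm b a]
      ring
    calc 4 * |P a b| = |P (a + b) (a + b) - P (a - b) (a - b)| := by
          rw [← h4, abs_mul]; norm_num
      _ ≤ |P (a + b) (a + b)| + |P (a - b) (a - b)| := abs_sub _ _
      _ ≤ d * ‖a + b‖ ^ 2 + d * ‖a - b‖ ^ 2 := add_le_add (hP _) (hP _)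
      _ = 2 * d * (‖a‖ ^ 2 + ‖b‖ ^ 2) := by
          rw [← mul_add, parallelogram_law_with_norm ℝ]; ring
  -- Rescale so that both arguments have norm `‖u‖ * ‖v‖`.
  have hscale : P (‖v‖ • u) (‖u‖ • v) = ‖u‖ * ‖v‖ * P u v := by
    simp only [map_smul, _root_.smul_apply, smul_eq_mul]; ring
  have h := polarization (‖v‖ • u) (‖u‖ • v)
  rw [hscale, abs_mul, abs_of_nonneg (by positivity), norm_smul, norm_smul, norm_norm,
    norm_norm] at h
  rcases (mul_nonneg (norm_nonneg u) (norm_nonneg v)).eq_or_lt with h0 | hpos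
  · rcases mul_eq_zero.1 h0.symm with hu | hv
    · simp [norm_eq_zero.1 hu]
    · simp [norm_eq_zero.1 hv]
  · refine le_of_mul_le_mul_left ?_ hpos
    linarith

variable {f : F → ℝ} {μ L : ℝ}

lemma abs_fderiv_fderiv_sub_inner_le (hf : ContDiff ℝ 2 f)
    (hhess : ∀ x w, μ * ‖w‖ ^ 2 ≤ fderiv ℝ (fderiv ℝ f) x w w ∧
      fderiv ℝ (fderiv ℝ f) x w w ≤ L * ‖w‖ ^ 2) (x u v : F) :
    |fderiv ℝ (fderiv ℝ f) x u v - (μ + L) / 2 * ⟪u, v⟫| ≤ (L - μ) / 2 * ‖u‖ * ‖v‖ := by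
  have hsymm : IsSymmSndFDerivAt ℝ f x := hf.contDiffAt.isSymmSndFDerivAt (by simp)
  -- `innerSL ℝ` is typed as conjugate-linear in its first argument; over `ℝ` that is `rfl`.
  let I : F →L[ℝ] F →L[ℝ] ℝ := innerSL ℝ
  have hI : ∀ a b, I a b = ⟪a, b⟫ := fun _ _ => rfl
  refine abs_apply_apply_le_of_abs_apply_self_le (fderiv ℝ (fderiv ℝ f) x - ((μ + L) / 2) • I)
    (fun u v => ?_) (fun w => ?_) u v
  · simp only [_root_.sub_apply, _root_.smul_apply, smul_eq_mul, hI, hsymm u v,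
      real_inner_comm u v]
  · simp only [_root_.sub_apply, _root_.smul_apply, smul_eq_mul, hI, real_inner_self_eq_norm_sq]
    obtain ⟨hlo, hhi⟩ := hhess x w
    rw [abs_le]
    constructor <;> linarith

lemma le_fderiv_apply_sub_fderiv_apply (hf : ContDiff ℝ 2 f)
    (hhess : ∀ x w, μ * ‖w‖ ^ 2 ≤ fderiv ℝ (fderiv ℝ f) x w w ∧
      fderiv ℝ (fderiv ℝ f) x w w ≤ L * ‖w‖ ^ 2) (x y w : F) :
    (μ + L) / 2 * ⟪y - x, w⟫ - (L - μ) / 2 * ‖y - x‖ * ‖w‖ ≤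
      fderiv ℝ f y w - fderiv ℝ f x w := by
  set g : ℝ → ℝ := fun t => fderiv ℝ f (x + t • (y - x)) w
  have hg : ∀ t, HasDerivAt g (fderiv ℝ (fderiv ℝ f) (x + t • (y - x)) (y - x) w) t := by
    intro t
    have hline : HasDerivAt (fun t : ℝ => x + t • (y - x)) (y - x) t := by
      simpa using ((hasDerivAt_id t).smul_const (y - x)).const_add x
    have hdiff : Differentiable ℝ (fderiv ℝ f) :=
      (hf.fderiv_right (m := 1) le_rfl).differentiable one_ne_zero
    exact (ContinuousLinearMap.apply ℝ ℝ w).hasFDerivAt.comp_hasDerivAt t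
      ((hdiff _).hasFDerivAt.comp_hasDerivAt t hline)
  have hmv := mul_sub_le_image_sub_of_le_deriv
    (C := (μ + L) / 2 * ⟪y - x, w⟫ - (L - μ) / 2 * ‖y - x‖ * ‖w‖)
    (fun t => (hg t).differentiableAt) (fun t => ?_) zero_le_one
  · simpa [g] using hmv
  · rw [(hg t).deriv]
    have h := abs_fderiv_fderiv_sub_inner_le hf hhess (x + t • (y - x)) (y - x) w
    linarith [(abs_le.1 h).1]

end InnerProductSpace

theorem stmt_6_general {n1 n2 r : ℕ}
    (f : Matrix (Fin n1) (Fin n2) ℝ → ℝ)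
    (gradf : Matrix (Fin n1) (Fin n2) ℝ → Matrix (Fin n1) (Fin n2) ℝ)
    (μ L : ℝ) (hμ : 0 < μ) (hμL : μ ≤ L)
    (hf : ContDiff ℝ 2 f)
    (hgrad : ∀ X W : Matrix (Fin n1) (Fin n2) ℝ,
      HasDerivAt (fun t : ℝ => f (X + t • W)) (finner (gradf X) W) 0)
    (hhess : ∀ X W : Matrix (Fin n1) (Fin n2) ℝ,
      μ * fnorm W ^ 2 ≤ iteratedFDeriv ℝ 2 f X ![W, W] ∧
        iteratedFDeriv ℝ 2 f X ![W, W] ≤ L * fnorm W ^ 2)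
    (Xstar : Matrix (Fin n1) (Fin n2) ℝ) (hXstar : gradf Xstar = 0)
    (R : Matrix (Fin n2) (Fin r) ℝ)
    (X : Matrix (Fin n1) (Fin n2) ℝ)
    (E : Matrix (Fin n1) (Fin n2) ℝ) (hE : E = X - Xstar)
    (ε : ℝ) (hε : ε = (L - μ) / (L + μ)) :
    ∀ O : Matrix (Fin n1) (Fin r) ℝ, fnorm O = 1 →
      finner (gradf X * R) O ≥
          (μ + L) / 2 * (finner E (O * Rᵀ) - ε * fnorm E * fnorm (O * Rᵀ)) ∧
        fnorm (gradf X * R) ≥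
          (μ + L) / 2 * (finner E (O * Rᵀ) - ε * fnorm E * fnorm (O * Rᵀ)) := by
  intro O hO
  have hgrad_eq : ∀ Y W, fderiv ℝ f Y W = finner (gradf Y) W := fun Y W =>
    ((hf.differentiable two_ne_zero Y).hasFDerivAt.hasLineDerivAt W).unique (hgrad Y W)
  have hhess' : ∀ Y W : Matrix (Fin n1) (Fin n2) ℝ,
      μ * ‖W‖ ^ 2 ≤ fderiv ℝ (fderiv ℝ f) Y W W ∧
        fderiv ℝ (fderiv ℝ f) Y W W ≤ L * ‖W‖ ^ 2 := by
    intro Y W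
    have h := hhess Y W
    rw [iteratedFDeriv_two_apply, fnorm_eq_norm] at h
    exact h
  -- Restated so that `fderiv` carries the instances of the statement, which `hgrad_eq` uses.
  have key : (μ + L) / 2 * ⟪X - Xstar, O * Rᵀ⟫ - (L - μ) / 2 * ‖X - Xstar‖ * ‖O * Rᵀ‖ ≤
      fderiv ℝ f X (O * Rᵀ) - fderiv ℝ f Xstar (O * Rᵀ) :=
    le_fderiv_apply_sub_fderiv_apply hf hhess' Xstar X (O * Rᵀ)
  rw [hgrad_eq, hgrad_eq, hXstar, ← real_inner_eq_finner 0, inner_zero_left, sub_zero,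
    ← finner_mul_eq_finner_mul_transpose, ← hE, ← fnorm_eq_norm, ← fnorm_eq_norm] at key
  have hcs : finner (gradf X * R) O ≤ fnorm (gradf X * R) := by
    have h := real_inner_le_norm (gradf X * R) O
    rwa [← fnorm_eq_norm, ← fnorm_eq_norm, hO, mul_one] at h
  have hε' : (μ + L) / 2 * ε = (L - μ) / 2 := by
    have : L + μ ≠ 0 := by linarith
    rw [hε]; field_simp; ring
  rw [mul_sub, ← mul_assoc, ← mul_assoc, hε']
  exact ⟨key, key.trans hcs⟩

/-- matrix form of the paper's appendix Lemma 12.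
Variational lower bound on the factor gradient `∇f(X) R` under global two-sided
Hessian bounds. -/
theorem stmt_6 {n1 n2 r : ℕ}
    (f : Matrix (Fin n1) (Fin n2) ℝ → ℝ)
    (gradf : Matrix (Fin n1) (Fin n2) ℝ → Matrix (Fin n1) (Fin n2) ℝ)
    (μ L : ℝ) (hμ : 0 < μ) (hμL : μ ≤ L)
    (hf : ContDiff ℝ 2 f)
    (hgrad : ∀ X W : Matrix (Fin n1) (Fin n2) ℝ,
      HasDerivAt (fun t : ℝ => f (X + t • W)) (finner (gradf X) W) 0)
    (hhess : ∀ X W : Matrix (Fin n1) (Fin n2) ℝ,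
      μ * fnorm W ^ 2 ≤ iteratedFDeriv ℝ 2 f X ![W, W] ∧
        iteratedFDeriv ℝ 2 f X ![W, W] ≤ L * fnorm W ^ 2)
    (Xstar : Matrix (Fin n1) (Fin n2) ℝ) (hXstar : gradf Xstar = 0)
    (B : Matrix (Fin n1) (Fin r) ℝ) (R : Matrix (Fin n2) (Fin r) ℝ)
    (X : Matrix (Fin n1) (Fin n2) ℝ) (hX : X = B * Rᵀ)
    (E : Matrix (Fin n1) (Fin n2) ℝ) (hE : E = X - Xstar)
    (ε : ℝ) (hε : ε = (L - μ) / (L + μ)) :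
    ∀ O : Matrix (Fin n1) (Fin r) ℝ, fnorm O = 1 →
      finner (gradf X * R) O ≥
          (μ + L) / 2 * (finner E (O * Rᵀ) - ε * fnorm E * fnorm (O * Rᵀ)) ∧
        fnorm (gradf X * R) ≥
          (μ + L) / 2 * (finner E (O * Rᵀ) - ε * fnorm E * fnorm (O * Rᵀ)) :=
  stmt_6_general f gradf μ L hμ hμL hf hgrad hhess Xstar hXstar R X E hE ε hε
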